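/- In the elliptical log-likelihood ℓ(θ) = -½ log|Σ| + log g(u) with u = z^⊤Σ^{-1}z and z = Y - μ(θ), the negative second partial derivative -∂²ℓ/∂θ_r∂θ_s evaluated with v = -2W_g(u) and v̇ = -2W_g'(u) equals T_{(r)}^⊤ Σ^{-1} d_{(s)} + tr(B_{(r)} A_{(s)}) + E_{(rs)}, where T_{(r)}^⊤ = -v̇ (z^⊤ A_{(r)} z) z^⊤ + 2 v̇ (d_{(r)}^⊤ Σ^{-1} z) z^⊤ + v d_{(r)}^⊤ + v z^⊤ Σ^{-1} C_{(r)}, B_{(r)} = -v̇ (d_{(r)}^⊤ Σ^{-1} z) z z^⊤ + ½ v̇ (z^⊤ A_{(r)} z) z z^⊤ - v z d_{(r)}^⊤ - ½ C_{(r)}, and E_{(rs)} = -½ tr[A_{(sr)}(Σ - v z z^⊤)] - v z^⊤ Σ^{-1} d_{(sr)}, with d_{(sr)} = ∂²μ/∂θ_s∂θ_r, A_{(r)} = -Σ^{-1}C_{(r)}Σ^{-1}, and A_{(sr)} = ∂A_{(s)}/∂θ_r. -/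

import Mathlib

open Matrix
attribute [local instance] Matrix.frobeniusNormedAddCommGroup Matrix.frobeniusNormedRing Matrix.frobeniusNormedSpace

/-!
Differentiating `ℓ` in `θ_s` along `y ↦ (μ(x, y), Σ(x, y))`, Jacobi's formula
`∂ log det Σ = tr (Σ⁻¹ ∂Σ)` and `∂Σ⁻¹ = -Σ⁻¹ ∂Σ Σ⁻¹` give the score
`½ tr (A_(s) Σ) + W_g(u) (zᵀ A_(s) z - 2 d_(s)ᵀ Σ⁻¹ z)`. Writing the log-determinant term as
`½ tr (A_(s) Σ)` rather than `-½ tr (Σ⁻¹ C_(s))` makes its `θ_r`-derivative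
`½ tr (A_(sr) Σ) + ½ tr (A_(s) C_(r))`, which are exactly the trace terms of `E_(rs)` and `B_(r)`.
The product rule does the rest; `Σ⁻¹`, `A_(r)` and `A_(s)` are symmetric, being (derivatives of)
symmetric families, which lets the remaining terms be regrouped into `T_(r)`, `B_(r)`, `E_(rs)`.
-/

section MatrixAlgebra

variable {n R : Type*} [Fintype n] [CommSemiring R]

theorem Matrix.IsSymm.dotProduct_mulVec_comm {M : Matrix n n R} (hM : M.IsSymm) (x y : n → R) :
    x ⬝ᵥ M *ᵥ y = y ⬝ᵥ M *ᵥ x := by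
  simpa only [hM.eq] using dotProduct_transpose_mulVec M x y

theorem Matrix.trace_vecMulVec_mul (x y : n → R) (M : Matrix n n R) :
    (vecMulVec x y * M).trace = y ⬝ᵥ M *ᵥ x := by
  rw [vecMulVec_mul, trace_vecMulVec, dotProduct_comm, dotProduct_mulVec]

theorem Equiv.Perm.exists_ne_apply_ne [DecidableEq n] {σ : Equiv.Perm n} (hσ : σ ≠ 1) (i : n) :
    ∃ j, j ≠ i ∧ σ j ≠ j := by
  obtain ⟨j, hj, hji⟩ := Finset.exists_mem_ne (Equiv.Perm.two_le_card_support_of_ne_one hσ) i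
  exact ⟨j, hji, Equiv.Perm.mem_support.1 hj⟩

end MatrixAlgebra

section MatrixCalculus

attribute [local instance] Matrix.frobeniusNormedAlgebra

variable {m n : Type*} [Fintype m] [Fintype n] {t : ℝ}

theorem HasDerivAt.matrix_apply {A : ℝ → Matrix m n ℝ} {A' : Matrix m n ℝ}
    (hA : HasDerivAt A A' t) (i : m) (j : n) : HasDerivAt (fun t => A t i j) (A' i j) t :=
  (entryLinearMap ℝ ℝ i j).toContinuousLinearMap.hasFDerivAt.comp_hasDerivAt t hA

theorem HasDerivAt.dotProduct {f g : ℝ → n → ℝ} {f' g' : n → ℝ}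
    (hf : HasDerivAt f f' t) (hg : HasDerivAt g g' t) :
    HasDerivAt (fun t => f t ⬝ᵥ g t) (f' ⬝ᵥ g t + f t ⬝ᵥ g') t := by
  have h := HasDerivAt.fun_sum (u := Finset.univ) fun i _ =>
    (hasDerivAt_pi.1 hf i).fun_mul (hasDerivAt_pi.1 hg i)
  rw [Finset.sum_add_distrib] at h
  exact h

theorem HasDerivAt.mulVec {M : ℝ → Matrix m n ℝ} {M' : Matrix m n ℝ} {x : ℝ → n → ℝ}
    {x' : n → ℝ} (hM : HasDerivAt M M' t) (hx : HasDerivAt x x' t) :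
    HasDerivAt (fun t => M t *ᵥ x t) (M' *ᵥ x t + M t *ᵥ x') t :=
  hasDerivAt_pi.2 fun i =>
    (hasDerivAt_pi.2 fun j => hM.matrix_apply i j).dotProduct hx

theorem HasDerivAt.matrix_mul [DecidableEq n] {A B : ℝ → Matrix n n ℝ} {A' B' : Matrix n n ℝ}
    (hA : HasDerivAt A A' t) (hB : HasDerivAt B B' t) :
    HasDerivAt (fun t => A t * B t) (A' * B t + A t * B') t :=
  hA.fun_mul hB

theorem HasDerivAt.matrix_trace {A : ℝ → Matrix n n ℝ} {A' : Matrix n n ℝ}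
    (hA : HasDerivAt A A' t) : HasDerivAt (fun t => (A t).trace) A'.trace t :=
  HasDerivAt.fun_sum fun i _ => hA.matrix_apply i i

theorem HasDerivAt.matrix_inv [DecidableEq n] {A : ℝ → Matrix n n ℝ} {A' : Matrix n n ℝ}
    (hA : HasDerivAt A A' t) (hunit : IsUnit (A t)) :
    HasDerivAt (fun t => (A t)⁻¹) (-((A t)⁻¹ * A' * (A t)⁻¹)) t := by
  obtain ⟨u, hu⟩ := hunit
  have hinv := hasFDerivAt_ringInverse (𝕜 := ℝ) u
  rw [hu] at hinv
  have h := hinv.comp_hasDerivAt t hA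
  simp only [Function.comp_def, ← nonsing_inv_eq_ringInverse, coe_units_inv, hu] at h
  exact h

theorem Matrix.IsSymm.of_hasDerivAt {A : ℝ → Matrix n n ℝ} {A' : Matrix n n ℝ}
    (hA : HasDerivAt A A' t) (hsymm : ∀ x, (A x).IsSymm) : A'.IsSymm :=
  IsSymm.ext fun i j => by
    have hfun : (fun x => A x i j) = fun x => A x j i :=
      funext fun x => ((hsymm x).apply i j).symm
    exact (hA.matrix_apply j i).unique (hfun ▸ hA.matrix_apply i j)

theorem HasDerivAt.dotProduct_mulVec_self {z : ℝ → n → ℝ} {z' : n → ℝ} {P : ℝ → Matrix n n ℝ}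
    {P' : Matrix n n ℝ} (hz : HasDerivAt z z' t) (hP : HasDerivAt P P' t) (hsymm : (P t).IsSymm) :
    HasDerivAt (fun t => z t ⬝ᵥ P t *ᵥ z t) (z t ⬝ᵥ P' *ᵥ z t + 2 * (z' ⬝ᵥ P t *ᵥ z t)) t := by
  convert hz.dotProduct (hP.mulVec hz) using 1
  rw [dotProduct_add, hsymm.dotProduct_mulVec_comm (z t) z']
  ring

theorem HasDerivAt.det_of_eq_one [DecidableEq n] {A : ℝ → Matrix n n ℝ} {A' : Matrix n n ℝ}
    (hA : HasDerivAt A A' t) (h1 : A t = 1) : HasDerivAt (fun t => (A t).det) A'.trace t := by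
  simp_rw [det_apply']
  refine (HasDerivAt.fun_sum fun (σ : Equiv.Perm n) _ =>
    (HasDerivAt.fun_finsetProd fun i _ => hA.matrix_apply (σ i) i).const_mul
      (σ.sign : ℝ)).congr_deriv ?_
  rw [Finset.sum_eq_single 1 ?_ (by simp)]
  · simp [h1, trace]
  · -- every product omitting one factor still contains an off-diagonal entry of `A t = 1`
    intro σ _ hσ
    refine mul_eq_zero_of_right _ (Finset.sum_eq_zero fun i _ => ?_)
    obtain ⟨j, hji, hσj⟩ := σ.exists_ne_apply_ne hσ i
    rw [Finset.prod_eq_zero (Finset.mem_erase.2 ⟨hji, Finset.mem_univ j⟩)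
      (by rw [h1, one_apply_ne hσj]), zero_smul]

theorem HasDerivAt.det [DecidableEq n] {A : ℝ → Matrix n n ℝ} {A' : Matrix n n ℝ}
    (hA : HasDerivAt A A' t) (hunit : IsUnit (A t)) :
    HasDerivAt (fun t => (A t).det) ((A t).det * ((A t)⁻¹ * A').trace) t := by
  have hdet : IsUnit (A t).det := (isUnit_iff_isUnit_det _).1 hunit
  have hfun : (fun x => (A x).det) = fun x => (A t).det * ((A t)⁻¹ * A x).det :=
    funext fun x => by rw [← det_mul, ← Matrix.mul_assoc, mul_nonsing_inv _ hdet, Matrix.one_mul]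
  rw [hfun]
  exact ((hA.const_mul (A t)⁻¹).det_of_eq_one (nonsing_inv_mul _ hdet)).const_mul _

theorem HasDerivAt.log_det [DecidableEq n] {A : ℝ → Matrix n n ℝ} {A' : Matrix n n ℝ}
    (hA : HasDerivAt A A' t) (hunit : IsUnit (A t)) :
    HasDerivAt (fun t => Real.log (A t).det) ((A t)⁻¹ * A').trace t := by
  have hdet : (A t).det ≠ 0 := ((isUnit_iff_isUnit_det _).1 hunit).ne_zero
  simpa [hdet] using (hA.det hunit).log hdet

end MatrixCalculus

section Partial

variable {E : Type*} [NormedAddCommGroup E] [NormedSpace ℝ E] {F : ℝ → ℝ → E}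

theorem Differentiable.curry_left (hF : Differentiable ℝ (fun p : ℝ × ℝ => F p.1 p.2)) (y : ℝ) :
    Differentiable ℝ (fun x => F x y) :=
  hF.comp (differentiable_id.prodMk (differentiable_const y))

theorem Differentiable.curry_right (hF : Differentiable ℝ (fun p : ℝ × ℝ => F p.1 p.2)) (x : ℝ) :
    Differentiable ℝ (fun y => F x y) :=
  hF.comp ((differentiable_const x).prodMk differentiable_id)

theorem ContDiff.differentiable_deriv_curry_right
    (hF : ContDiff ℝ 2 (fun p : ℝ × ℝ => F p.1 p.2)) (s : ℝ) :
    Differentiable ℝ (fun x => deriv (fun y => F x y) s) := by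
  have hF1 : Differentiable ℝ (fun p : ℝ × ℝ => F p.1 p.2) := hF.differentiable two_ne_zero
  have hpartial : (fun x => deriv (fun y => F x y) s) =
      fun x => fderiv ℝ (fun p : ℝ × ℝ => F p.1 p.2) (x, s) (0, 1) := funext fun x =>
    ((hF1 (x, s)).hasFDerivAt.comp_hasDerivAt s
      ((hasDerivAt_const s x).prodMk (hasDerivAt_id s))).deriv
  rw [hpartial]
  exact fun x => ((((hF.fderiv_right (m := 1) (by norm_num)).differentiable one_ne_zero).comp
    (differentiable_id.prodMk (differentiable_const s))) x).clm_apply (differentiableAt_const _)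

end Partial

section EllipticalScore

variable {n : Type*} [Fintype n] [DecidableEq n] {t : ℝ}

/-- The score `∂ℓ/∂θ` of the elliptical log-likelihood, in terms of `Σ`, `P = Σ⁻¹`,
`a = ∂P/∂θ`, the residual `z` and `d = ∂z/∂θ`. -/
noncomputable def ellipticalScore (W : ℝ → ℝ) (S P a : Matrix n n ℝ) (z d : n → ℝ) : ℝ :=
  (1 / 2) * (a * S).trace + W (z ⬝ᵥ P *ᵥ z) * (z ⬝ᵥ a *ᵥ z + 2 * (d ⬝ᵥ P *ᵥ z))

theorem hasDerivAt_ellipticalLogLik {L W : ℝ → ℝ} (Y : n → ℝ) {m : ℝ → n → ℝ} {m' : n → ℝ}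
    {S : ℝ → Matrix n n ℝ} {S' : Matrix n n ℝ} (hm : HasDerivAt m m' t) (hS : HasDerivAt S S' t)
    (hsymm : (S t).IsSymm) (hunit : IsUnit (S t))
    (hL : HasDerivAt L (W ((Y - m t) ⬝ᵥ (S t)⁻¹ *ᵥ (Y - m t)))
      ((Y - m t) ⬝ᵥ (S t)⁻¹ *ᵥ (Y - m t))) :
    HasDerivAt (fun t => -(1 / 2) * Real.log (S t).det + L ((Y - m t) ⬝ᵥ (S t)⁻¹ *ᵥ (Y - m t)))
      (ellipticalScore W (S t) (S t)⁻¹ (-((S t)⁻¹ * S' * (S t)⁻¹)) (Y - m t) (-m')) t := by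
  have hquad := (hm.const_sub Y).dotProduct_mulVec_self (hS.matrix_inv hunit) hsymm.inv
  refine (((hS.log_det hunit).const_mul _).add (hL.comp t hquad)).congr_deriv ?_
  have htrace : (-((S t)⁻¹ * S' * (S t)⁻¹) * S t).trace = -((S t)⁻¹ * S').trace := by
    rw [Matrix.neg_mul, trace_neg, Matrix.mul_assoc,
      nonsing_inv_mul _ ((isUnit_iff_isUnit_det _).1 hunit), Matrix.mul_one]
  rw [ellipticalScore, htrace]
  ring

theorem HasDerivAt.ellipticalScore {W : ℝ → ℝ} {W' : ℝ} {S P a : ℝ → Matrix n n ℝ}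
    {S' P' a' : Matrix n n ℝ} {z d : ℝ → n → ℝ} {z' d' : n → ℝ}
    (hS : HasDerivAt S S' t) (hP : HasDerivAt P P' t) (hPsymm : (P t).IsSymm)
    (ha : HasDerivAt a a' t) (hasymm : (a t).IsSymm) (hz : HasDerivAt z z' t)
    (hd : HasDerivAt d d' t) (hW : HasDerivAt W W' (z t ⬝ᵥ P t *ᵥ z t)) :
    HasDerivAt (fun t => ellipticalScore W (S t) (P t) (a t) (z t) (d t))
      ((1 / 2) * (a' * S t + a t * S').trace +
        (W' * (z t ⬝ᵥ P' *ᵥ z t + 2 * (z' ⬝ᵥ P t *ᵥ z t)) *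
            (z t ⬝ᵥ a t *ᵥ z t + 2 * (d t ⬝ᵥ P t *ᵥ z t)) +
          W (z t ⬝ᵥ P t *ᵥ z t) * (z t ⬝ᵥ a' *ᵥ z t + 2 * (z' ⬝ᵥ a t *ᵥ z t) +
            2 * (d' ⬝ᵥ P t *ᵥ z t + d t ⬝ᵥ (P' *ᵥ z t + P t *ᵥ z'))))) t :=
  (((ha.matrix_mul hS).matrix_trace.const_mul _).add
    ((hW.comp t (hz.dotProduct_mulVec_self hP hPsymm)).mul
      ((hz.dotProduct_mulVec_self ha hasymm).add ((hd.dotProduct (hP.mulVec hz)).const_mul 2))))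

end EllipticalScore

theorem stmt_15 (q : ℕ) (Y : Fin q → ℝ)
    (μ : ℝ → ℝ → (Fin q → ℝ)) (Sig : ℝ → ℝ → Matrix (Fin q) (Fin q) ℝ)
    (hμ : ContDiff ℝ 2 (fun p : ℝ × ℝ => μ p.1 p.2))
    (hSig : ContDiff ℝ 2 (fun p : ℝ × ℝ => Sig p.1 p.2))
    (hpd : ∀ r s, (Sig r s).PosDef)
    (g Wg : ℝ → ℝ) (hgpos : ∀ x, 0 < g x) (hg : ContDiff ℝ 2 g)
    (hW : ∀ x, Wg x = deriv (fun t => Real.log (g t)) x)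
    (ℓ : ℝ → ℝ → ℝ)
    (hℓ : ∀ r s, ℓ r s = -(1 / 2) * Real.log (Sig r s).det +
      Real.log (g ((Y - μ r s) ⬝ᵥ (Sig r s)⁻¹ *ᵥ (Y - μ r s))))
    (r s : ℝ)
    (S : Matrix (Fin q) (Fin q) ℝ) (hS : S = Sig r s)
    (z : Fin q → ℝ) (hzdef : z = Y - μ r s)
    (u v vd : ℝ) (hu : u = z ⬝ᵥ S⁻¹ *ᵥ z)
    (hv : v = -2 * Wg u) (hvd : vd = -2 * deriv Wg u)
    (dr ds : Fin q → ℝ)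
    (hdr : dr = deriv (fun x => μ x s) r) (hds : ds = deriv (fun y => μ r y) s)
    (Cr Cs : Matrix (Fin q) (Fin q) ℝ)
    (hCr : Cr = deriv (fun x => Sig x s) r) (hCs : Cs = deriv (fun y => Sig r y) s)
    (Ar As : Matrix (Fin q) (Fin q) ℝ)
    (hAr : Ar = -(S⁻¹ * Cr * S⁻¹)) (hAsm : As = -(S⁻¹ * Cs * S⁻¹))
    (Asr : Matrix (Fin q) (Fin q) ℝ)
    (hAsr : Asr =
      deriv (fun x => -((Sig x s)⁻¹ * deriv (fun y => Sig x y) s * (Sig x s)⁻¹)) r)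
    (dsr : Fin q → ℝ)
    (hdsr : dsr = deriv (fun x => deriv (fun y => μ x y) s) r)
    (T : Fin q → ℝ)
    (hT : T = (-vd * (z ⬝ᵥ Ar *ᵥ z)) • z + (2 * vd * (dr ⬝ᵥ S⁻¹ *ᵥ z)) • z +
      v • dr + v • ((S⁻¹ * Cr)ᵀ *ᵥ z))
    (B : Matrix (Fin q) (Fin q) ℝ)
    (hB : B = (-vd * (dr ⬝ᵥ S⁻¹ *ᵥ z)) • Matrix.vecMulVec z z +
      ((1 / 2) * vd * (z ⬝ᵥ Ar *ᵥ z)) • Matrix.vecMulVec z z -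
      v • Matrix.vecMulVec z dr - (1 / 2 : ℝ) • Cr)
    (E : ℝ)
    (hE : E = -(1 / 2) * Matrix.trace (Asr * (S - v • Matrix.vecMulVec z z)) -
      v * (z ⬝ᵥ S⁻¹ *ᵥ dsr)) :
    -(deriv (fun x => deriv (fun y => ℓ x y) s) r) =
      T ⬝ᵥ S⁻¹ *ᵥ ds + Matrix.trace (B * As) + E := by
  have hsymm : ∀ x y, (Sig x y).IsSymm := fun x y =>
    isHermitian_iff_isSymm.1 (hpd x y).isHermitian
  have hunit : ∀ x y, IsUnit (Sig x y) := fun x y => (hpd x y).isUnit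
  have hlogg : ContDiff ℝ 2 (fun t => Real.log (g t)) := hg.log fun t => (hgpos t).ne'
  have hWg : Wg = deriv (fun t => Real.log (g t)) := funext hW
  have hL : ∀ u, HasDerivAt (fun t => Real.log (g t)) (Wg u) u := fun u =>
    hWg ▸ (hlogg.differentiable two_ne_zero u).hasDerivAt
  have hWd : Differentiable ℝ Wg := hWg ▸ hlogg.differentiable_deriv_two
  have hSig1 := hSig.differentiable two_ne_zero
  have hμ1 := hμ.differentiable two_ne_zero
  have hscore : (fun x => deriv (fun y => ℓ x y) s) = fun x =>
      ellipticalScore Wg (Sig x s) (Sig x s)⁻¹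
        (-((Sig x s)⁻¹ * deriv (fun y => Sig x y) s * (Sig x s)⁻¹)) (Y - μ x s)
        (-deriv (fun y => μ x y) s) := funext fun x => by
    simp_rw [hℓ x]
    exact (hasDerivAt_ellipticalLogLik Y ((hμ1.curry_right x s).hasDerivAt)
      ((hSig1.curry_right x s).hasDerivAt) (hsymm x s) (hunit x s) (hL _)).deriv
  have hSx : HasDerivAt (fun x => Sig x s) Cr r := hCr ▸ (hSig1.curry_left s r).hasDerivAt
  have hPx : HasDerivAt (fun x => (Sig x s)⁻¹) Ar r := by
    rw [hAr, hS]; exact hSx.matrix_inv (hunit r s)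
  have hax : HasDerivAt (fun x => -((Sig x s)⁻¹ * deriv (fun y => Sig x y) s * (Sig x s)⁻¹))
      Asr r :=
    hAsr ▸ (((hPx.matrix_mul (hSig.differentiable_deriv_curry_right s r).hasDerivAt).matrix_mul
      hPx).neg).differentiableAt.hasDerivAt
  have hzx : HasDerivAt (fun x => Y - μ x s) (-dr) r :=
    hdr ▸ (hμ1.curry_left s r).hasDerivAt.const_sub Y
  have hdx : HasDerivAt (fun x => -deriv (fun y => μ x y) s) (-dsr) r :=
    hdsr ▸ (hμ.differentiable_deriv_curry_right s r).hasDerivAt.neg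
  have hAs : -((Sig r s)⁻¹ * deriv (fun y => Sig r y) s * (Sig r s)⁻¹) = As := by
    rw [hAsm, hS, hCs]
  have hAsymm : As.IsSymm :=
    .of_hasDerivAt (hAs ▸ (hSig1.curry_right r s).hasDerivAt.matrix_inv (hunit r s))
      fun y => (hsymm r y).inv
  have hArsymm : Ar.IsSymm := .of_hasDerivAt hPx fun x => (hsymm x s).inv
  rw [hscore, (hSx.ellipticalScore hPx (hsymm r s).inv hax (hAs ▸ hAsymm) hzx hdx
    (hWd _).hasDerivAt).deriv, hAs, ← hS, ← hzdef, ← hds, ← hu]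
  have hSinv : S⁻¹.IsSymm := hS ▸ (hsymm r s).inv
  have hTterm : (S⁻¹ * Cr)ᵀ *ᵥ z ⬝ᵥ S⁻¹ *ᵥ ds = -(z ⬝ᵥ Ar *ᵥ ds) := by
    rw [mulVec_transpose, ← dotProduct_mulVec, mulVec_mulVec, hAr, neg_mulVec, dotProduct_neg,
      neg_neg]
  rw [hT, hB, hE, hv, hvd]
  simp only [add_dotProduct, smul_dotProduct, neg_dotProduct, dotProduct_add, dotProduct_neg,
    mulVec_neg, smul_eq_mul, Matrix.add_mul, Matrix.sub_mul, Matrix.mul_sub, Matrix.mul_smul,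
    smul_mul_assoc, trace_add, trace_sub, trace_smul, trace_vecMulVec_mul, mul_vecMulVec,
    trace_vecMulVec, hTterm]
  rw [hSinv.dotProduct_mulVec_comm z ds, hSinv.dotProduct_mulVec_comm z dsr,
    hSinv.dotProduct_mulVec_comm ds dr, hArsymm.dotProduct_mulVec_comm z ds,
    dotProduct_comm (Asr *ᵥ z), trace_mul_comm As]
  ring
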